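/- Let S be a finite set of size s ≥ 2, let k ≥ 2, and let A ∈ S^{N×k} be an N×k array with entries in S where N = λs² for a positive integer λ. Set γ := (λs − 1)k / (λs² − 1). Then Unb_{2,2}(A) ≥ λs²(λs² − 1)·(C(⌊γ⌋, 2) + ⌊γ⌋(γ − ⌊γ⌋)) − λ(λ−1)s²·C(k,2), where ⌊γ⌋ is the integer part of γ and C(·,·) denotes the binomial coefficient (with real first argument interpreted via the integer ⌊γ⌋). -/
import Mathlib


open Finset

noncomputable section

instance {t k : ℕ} : DecidablePred (StrictMono : (Fin t → Fin k) → Prop) := fun f =>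
  decidable_of_iff (∀ a b : Fin t, a < b → f a < f b) Iff.rfl

/-- The number of rows of the array `A` whose restriction to the columns
`j 0, …, j (t-1)` equals the tuple `x`. -/
def rowCount {S : Type*} [DecidableEq S] {N k t : ℕ} (A : Fin N → Fin k → S)
    (x : Fin t → S) (j : Fin t → Fin k) : ℕ :=
  (Finset.univ.filter fun i : Fin N => ∀ r, A i (j r) = x r).card

/-- `A` is an orthogonal array with `s` levels and strength `t`. -/
def IsOA {S : Type*} [DecidableEq S] (s t : ℕ) {N k : ℕ} (A : Fin N → Fin k → S) : Prop :=
  ∀ (x : Fin t → S) (j : Fin t → Fin k), StrictMono j →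
    (rowCount A x j : ℝ) = (N : ℝ) / (s : ℝ) ^ t

/-- The `p`-unbalance of strength `t` of `A` (with `s` levels). -/
def Unb {S : Type*} [Fintype S] [DecidableEq S] (s : ℕ) (p : ℝ) (t : ℕ) {N k : ℕ}
    (A : Fin N → Fin k → S) : ℝ :=
  ∑ x : Fin t → S, ∑ j ∈ Finset.univ.filter (fun j : Fin t → Fin k => StrictMono j),
    |(rowCount A x j : ℝ) - (N : ℝ) / (s : ℝ) ^ t| ^ p

/-- The tolerance of strength `t` of `A` (with `s` levels). -/
def Tol {S : Type*} [DecidableEq S] (s t : ℕ) {N k : ℕ} (A : Fin N → Fin k → S) : ℝ :=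
  ⨆ (x : Fin t → S) (j : {j : Fin t → Fin k // StrictMono j}),
    |(rowCount A x j.1 : ℝ) - (N : ℝ) / (s : ℝ) ^ t|

/-- The Hamming similarity between the rows `r` and `r'` of `A`. -/
def Ham {S : Type*} [DecidableEq S] {N k : ℕ} (A : Fin N → Fin k → S) (r r' : Fin N) : ℕ :=
  (Finset.univ.filter fun j : Fin k => A r j = A r' j).card

/-- The matrix `X(A,f)`. -/
def Xmat {S : Type*} {N k : ℕ} (f : S → ℝ) (A : Fin N → Fin k → S) :
    Matrix (Fin N) (Fin k) ℝ :=
  Matrix.of fun i j => f (A i j) / Real.sqrt (∑ i' : Fin N, f (A i' j) ^ 2)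

/-- The absolute deviation of `f` with respect to the uniform measure. -/
def sigma1 {S : Type*} [Fintype S] (s : ℕ) (f : S → ℝ) : ℝ :=
  ⨅ α : ℝ, (∑ x : S, |f x - α|) / s

/-- The typical deviation of `f` with respect to the uniform measure. -/
def sigma2 {S : Type*} [Fintype S] (s : ℕ) (f : S → ℝ) : ℝ :=
  ⨅ α : ℝ, Real.sqrt ((∑ x : S, |f x - α| ^ 2) / s)
end


set_option linter.unusedSectionVars false


section aux
variable {β : Type*} [Fintype β] [DecidableEq β] {N : ℕ}

lemma fiber_card_sum (g : Fin N → β) :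
    ∑ x : β, (univ.filter fun i => g i = x).card = N := by
  have h := Finset.card_eq_sum_card_fiberwise (f := g) (s := (univ : Finset (Fin N)))
    (t := univ) (fun i _ => mem_univ _)
  simpa using h.symm

lemma fiber_card_sq_sum (g : Fin N → β) :
    ∑ x : β, ((univ.filter fun i => g i = x).card) ^ 2
      = ((univ : Finset (Fin N × Fin N)).filter fun q => g q.1 = g q.2).card := by
  have h := Finset.card_eq_sum_card_fiberwise (f := fun q : Fin N × Fin N => g q.1)
    (s := (univ : Finset (Fin N × Fin N)).filter fun q => g q.1 = g q.2) (t := univ)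
    (fun q _ => mem_univ _)
  rw [h]
  refine Finset.sum_congr rfl fun x _ => ?_
  have e : (((univ : Finset (Fin N × Fin N)).filter fun q => g q.1 = g q.2).filter
        fun q => g q.1 = x)
      = (univ.filter fun i => g i = x) ×ˢ (univ.filter fun i => g i = x) := by
    ext q
    simp only [mem_filter, mem_product, mem_univ, true_and]
    exact ⟨fun h => ⟨h.2, h.1.symm.trans h.2⟩, fun h => ⟨h.1.trans h.2.symm, h.1⟩⟩
  rw [e, Finset.card_product, sq]

lemma card_lt_pairs {k : ℕ} (T : Finset (Fin k)) :
    ((T ×ˢ T).filter fun p => p.1 < p.2).card = T.card.choose 2 := by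
  rw [← Finset.card_powersetCard 2 T]
  apply Finset.card_bij (fun p _ => ({p.1, p.2} : Finset (Fin k)))
  · intro p hp
    simp only [mem_filter, mem_product] at hp
    rw [Finset.mem_powersetCard]
    constructor
    · intro a ha
      rcases Finset.mem_insert.1 ha with h | h
      · exact h ▸ hp.1.1
      · exact (Finset.mem_singleton.1 h) ▸ hp.1.2
    · exact Finset.card_pair (ne_of_lt hp.2)
  · intro p hp q hq h
    simp only [mem_filter, mem_product] at hp hq
    have h1 : p.1 = q.1 ∨ p.1 = q.2 := by
      have := h ▸ (Finset.mem_insert_self p.1 {p.2}); simpa using this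
    have h2 : p.2 = q.1 ∨ p.2 = q.2 := by
      have := h ▸ (Finset.mem_insert_of_mem (Finset.mem_singleton_self p.2)); simpa using this
    have hP : p.1.val < p.2.val := hp.2
    have hQ : q.1.val < q.2.val := hq.2
    have : p.1.val = q.1.val ∧ p.2.val = q.2.val := by
      rcases h1 with h1 | h1 <;> rcases h2 with h2 | h2 <;>
        simp only [Fin.ext_iff] at h1 h2 <;> omega
    exact Prod.ext (Fin.ext this.1) (Fin.ext this.2)
  · intro t ht
    rw [Finset.mem_powersetCard] at ht
    obtain ⟨a, b, hab, rfl⟩ := Finset.card_eq_two.1 ht.2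
    have haT : a ∈ T := ht.1 (by simp)
    have hbT : b ∈ T := ht.1 (by simp)
    rcases hab.lt_or_gt with hlt | hlt
    · exact ⟨(a, b), mem_filter.2 ⟨mem_product.2 ⟨haT, hbT⟩, hlt⟩, rfl⟩
    · exact ⟨(b, a), mem_filter.2 ⟨mem_product.2 ⟨hbT, haT⟩, hlt⟩, (Finset.pair_comm b a)⟩

lemma choose2_tangent (m n : ℕ) :
    (m.choose 2 : ℝ) + (m : ℝ) * ((n : ℝ) - m) ≤ (n.choose 2 : ℝ) := by
  rw [Nat.cast_choose_two, Nat.cast_choose_two]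
  have key : (0 : ℝ) ≤ ((n : ℝ) - m) * ((n : ℝ) - m - 1) := by
    rcases le_or_gt n m with h | h
    · have h' : (n : ℝ) ≤ m := by exact_mod_cast h
      nlinarith [h']
    · have h' : (m : ℝ) + 1 ≤ n := by exact_mod_cast h
      exact mul_nonneg (by linarith) (by linarith)
  nlinarith [key]
end aux

section aux2
open Finset
variable {S : Type*} [Fintype S] [DecidableEq S] {N k : ℕ}

lemma strictMono_pair_iff {k : ℕ} (j : Fin 2 → Fin k) : StrictMono j ↔ j 0 < j 1 := by
  constructor
  · exact fun h => h (by decide : (0 : Fin 2) < 1)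
  · intro h a b hab
    have ha := a.isLt
    have hb := b.isLt
    have hab' : a.val < b.val := hab
    have e1 : a = 0 := Fin.ext (by omega)
    have e2 : b = 1 := Fin.ext (by omega)
    rw [e1, e2]; exact h

lemma pair_eta {k : ℕ} (j : Fin 2 → Fin k) : ![j 0, j 1] = j := by
  funext x
  fin_cases x <;> simp

lemma sum_SM {k : ℕ} {M : Type*} [AddCommMonoid M] (F : (Fin 2 → Fin k) → M) :
    ∑ j ∈ univ.filter (fun j : Fin 2 → Fin k => StrictMono j), F j
      = ∑ p ∈ univ.filter (fun p : Fin k × Fin k => p.1 < p.2), F ![p.1, p.2] := by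
  refine Finset.sum_nbij' (fun j => (j 0, j 1)) (fun p => ![p.1, p.2]) ?_ ?_ ?_ ?_ ?_
  · intro j hj
    simp only [mem_filter, mem_univ, true_and] at hj ⊢
    exact hj (by decide : (0 : Fin 2) < 1)
  · intro p hp
    simp only [mem_filter, mem_univ, true_and] at hp ⊢
    rw [strictMono_pair_iff]
    simpa using hp
  · intro j hj; exact pair_eta j
  · intro p hp; simp
  · intro j hj
    rw [pair_eta]

lemma rowCount_eq (A : Fin N → Fin k → S) (x : Fin 2 → S) (j : Fin 2 → Fin k) :
    rowCount A x j = (univ.filter fun i : Fin N => (fun r => A i (j r)) = x).card := by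
  unfold rowCount
  congr 1
  apply Finset.filter_congr
  intro i _
  simp [funext_iff]

lemma sum_rowCount (A : Fin N → Fin k → S) (j : Fin 2 → Fin k) :
    ∑ x : Fin 2 → S, rowCount A x j = N := by
  simp only [rowCount_eq]
  exact fiber_card_sum _

lemma sum_rowCount_sq (A : Fin N → Fin k → S) (j : Fin 2 → Fin k) :
    ∑ x : Fin 2 → S, (rowCount A x j) ^ 2
      = ((univ : Finset (Fin N × Fin N)).filter fun q => ∀ r, A q.1 (j r) = A q.2 (j r)).card := by
  simp only [rowCount_eq]
  rw [fiber_card_sq_sum (fun i r => A i (j r))]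
  congr 1
  apply Finset.filter_congr
  intro q _
  simp [funext_iff]

end aux2

section aux3
open Finset
variable {S : Type*} [Fintype S] [DecidableEq S] {N k : ℕ}

set_option linter.unusedSectionVars false

lemma sum_SM_agree (A : Fin N → Fin k → S) :
    ∑ j ∈ univ.filter (fun j : Fin 2 → Fin k => StrictMono j),
      ((univ : Finset (Fin N × Fin N)).filter fun q => ∀ r, A q.1 (j r) = A q.2 (j r)).card
      = ∑ q : Fin N × Fin N, (Ham A q.1 q.2).choose 2 := by
  rw [sum_SM]
  have e : ∀ p : Fin k × Fin k,
      ((univ : Finset (Fin N × Fin N)).filter fun q =>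
          ∀ r, A q.1 (![p.1, p.2] r) = A q.2 (![p.1, p.2] r))
        = (univ.filter fun q : Fin N × Fin N =>
            A q.1 p.1 = A q.2 p.1 ∧ A q.1 p.2 = A q.2 p.2) := by
    intro p
    apply Finset.filter_congr
    intro q _
    rw [Fin.forall_fin_two]
    simp
  simp only [e]
  simp only [Finset.card_filter]
  rw [Finset.sum_comm]
  refine Finset.sum_congr rfl fun q _ => ?_
  rw [← Finset.card_filter]
  have e2 : ((univ.filter fun p : Fin k × Fin k => p.1 < p.2).filter
        fun p => A q.1 p.1 = A q.2 p.1 ∧ A q.1 p.2 = A q.2 p.2)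
      = (((univ.filter fun c : Fin k => A q.1 c = A q.2 c) ×ˢ
          (univ.filter fun c : Fin k => A q.1 c = A q.2 c)).filter fun p => p.1 < p.2) := by
    ext p
    simp only [mem_filter, mem_product, mem_univ, true_and]
    tauto
  rw [e2, card_lt_pairs]
  rfl

lemma Ham_diag (A : Fin N → Fin k → S) (i : Fin N) : Ham A i i = k := by
  unfold Ham; simp

lemma sum_Ham (A : Fin N → Fin k → S) :
    ∑ q : Fin N × Fin N, Ham A q.1 q.2
      = ∑ c : Fin k, ∑ x : S, ((univ.filter fun i : Fin N => A i c = x).card) ^ 2 := by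
  have e : ∀ q : Fin N × Fin N, Ham A q.1 q.2
      = ∑ c : Fin k, if A q.1 c = A q.2 c then 1 else 0 := by
    intro q; unfold Ham; rw [Finset.card_filter]
  simp only [e]
  rw [Finset.sum_comm]
  refine Finset.sum_congr rfl fun c _ => ?_
  rw [fiber_card_sq_sum (fun i => A i c), Finset.card_filter]

lemma sum_split_diag {M : Type*} [AddCommMonoid M] (F : Fin N × Fin N → M) :
    ∑ q : Fin N × Fin N, F q
      = (∑ i : Fin N, F (i, i)) + ∑ q ∈ (univ : Finset (Fin N)).offDiag, F q := by
  have h1 : ∑ q ∈ univ.filter (fun q : Fin N × Fin N => q.1 = q.2), F q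
      = ∑ i : Fin N, F (i, i) := by
    refine Finset.sum_nbij' (fun q : Fin N × Fin N => q.1) (fun i => (i, i)) ?_ ?_ ?_ ?_ ?_
    · intro q hq; exact mem_univ _
    · intro i _; simp
    · intro q hq
      simp only [mem_filter, mem_univ, true_and] at hq
      exact Prod.ext rfl hq
    · intro i _; rfl
    · intro q hq
      simp only [mem_filter, mem_univ, true_and] at hq
      rw [show (q.1, q.1) = q from Prod.ext rfl hq]
  have h2 : univ.filter (fun q : Fin N × Fin N => ¬q.1 = q.2)
      = (univ : Finset (Fin N)).offDiag := by
    ext q; simp [Finset.mem_offDiag]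
  rw [← Finset.sum_filter_add_sum_filter_not univ (fun q : Fin N × Fin N => q.1 = q.2) F, h1, h2]

lemma SM_card (k : ℕ) :
    (univ.filter (fun j : Fin 2 → Fin k => StrictMono j)).card = k.choose 2 := by
  rw [Finset.card_eq_sum_ones, sum_SM (fun _ => 1), ← Finset.card_eq_sum_ones]
  have := card_lt_pairs (univ : Finset (Fin k))
  rw [Finset.univ_product_univ] at this
  simpa using this

end aux3

/-- Lower bound for the `2`-unbalance of strength `2` of an array with `N = λs²` rows:
`Unb ≥ λs²(λs²−1)(C(⌊γ⌋,2) + ⌊γ⌋(γ−⌊γ⌋)) − λ(λ−1)s²C(k,2)` with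
`γ = (λs−1)k/(λs²−1)`. -/
theorem statement3 {S : Type*} [Fintype S] [DecidableEq S] {s N k l : ℕ}
    (hs : 2 ≤ s) (hcard : Fintype.card S = s) (hk : 2 ≤ k) (hl : 0 < l)
    (hN : N = l * s ^ 2) (A : Fin N → Fin k → S) (γ : ℝ)
    (hγ : γ = ((l : ℝ) * s - 1) * k / ((l : ℝ) * s ^ 2 - 1)) :
    (l : ℝ) * (s : ℝ) ^ 2 * ((l : ℝ) * (s : ℝ) ^ 2 - 1) *
        ((⌊γ⌋₊.choose 2 : ℝ) + (⌊γ⌋₊ : ℝ) * (γ - (⌊γ⌋₊ : ℝ))) -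
      (l : ℝ) * ((l : ℝ) - 1) * (s : ℝ) ^ 2 * (k.choose 2 : ℝ) ≤ Unb s 2 2 A := by
  classical
  set m := ⌊γ⌋₊ with hm
  have hsR : (2 : ℝ) ≤ (s : ℝ) := by exact_mod_cast hs
  have hlR : (1 : ℝ) ≤ (l : ℝ) := by exact_mod_cast hl
  have hs0 : (0 : ℝ) < (s : ℝ) := by linarith
  have hNR : (N : ℝ) = (l : ℝ) * (s : ℝ) ^ 2 := by rw [hN]; push_cast; ring
  have hNn : 0 < N := by
    rw [hN]; exact Nat.mul_pos hl (pow_pos (by omega) 2)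
  have hden : (0 : ℝ) < (l : ℝ) * (s : ℝ) ^ 2 - 1 := by nlinarith
  have hγk : γ * ((l : ℝ) * (s : ℝ) ^ 2 - 1) = ((l : ℝ) * s - 1) * k := by
    rw [hγ]; field_simp
  have hc : (N : ℝ) / (s : ℝ) ^ 2 = (l : ℝ) := by
    rw [hNR]; field_simp
  -- Step A: rewrite Unb
  have hUnb : Unb s 2 2 A = ∑ j ∈ univ.filter (fun j : Fin 2 → Fin k => StrictMono j),
      ∑ x : Fin 2 → S, ((rowCount A x j : ℝ) - (l : ℝ)) ^ 2 := by
    rw [Unb, Finset.sum_comm]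
    refine Finset.sum_congr rfl fun j _ => Finset.sum_congr rfl fun x _ => ?_
    rw [hc, show ((2 : ℝ)) = ((2 : ℕ) : ℝ) by norm_num, Real.rpow_natCast, sq_abs]
  -- Step B: inner sum
  have hcardfun : Fintype.card (Fin 2 → S) = s ^ 2 := by
    simp [hcard]
  have hB : ∀ j : Fin 2 → Fin k,
      ∑ x : Fin 2 → S, ((rowCount A x j : ℝ) - (l : ℝ)) ^ 2
      = (((univ : Finset (Fin N × Fin N)).filter
            fun q => ∀ r, A q.1 (j r) = A q.2 (j r)).card : ℝ)
        - (l : ℝ) ^ 2 * (s : ℝ) ^ 2 := by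
    intro j
    have e1 : ∑ x : Fin 2 → S, ((rowCount A x j : ℝ)) ^ 2
        = (((univ : Finset (Fin N × Fin N)).filter
            fun q => ∀ r, A q.1 (j r) = A q.2 (j r)).card : ℝ) := by
      exact_mod_cast congrArg (Nat.cast : ℕ → ℝ) (sum_rowCount_sq A j)
    have e2 : ∑ x : Fin 2 → S, (rowCount A x j : ℝ) = (N : ℝ) := by
      exact_mod_cast congrArg (Nat.cast : ℕ → ℝ) (sum_rowCount A j)
    have expand : ∀ x : Fin 2 → S, ((rowCount A x j : ℝ) - (l : ℝ)) ^ 2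
        = (rowCount A x j : ℝ) ^ 2 - 2 * (l : ℝ) * (rowCount A x j : ℝ) + (l : ℝ) ^ 2 :=
      fun x => by ring
    rw [Finset.sum_congr rfl fun x _ => expand x, Finset.sum_add_distrib,
      Finset.sum_sub_distrib, e1, ← Finset.mul_sum, e2, Finset.sum_const, Finset.card_univ,
      hcardfun, nsmul_eq_mul]
    rw [hNR]; push_cast; ring
  -- Step C
  have hC : Unb s 2 2 A
      = ((∑ q : Fin N × Fin N, (Ham A q.1 q.2).choose 2 : ℕ) : ℝ)
        - (k.choose 2 : ℝ) * ((l : ℝ) ^ 2 * (s : ℝ) ^ 2) := by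
    rw [hUnb, Finset.sum_congr rfl fun j _ => hB j, Finset.sum_sub_distrib,
      Finset.sum_const, SM_card, nsmul_eq_mul]
    congr 1
    exact_mod_cast congrArg (Nat.cast : ℕ → ℝ) (sum_SM_agree A)
  -- splits
  have hsplitR := sum_split_diag (fun q : Fin N × Fin N => ((Ham A q.1 q.2).choose 2 : ℝ))
  have hsplitH := sum_split_diag (fun q : Fin N × Fin N => ((Ham A q.1 q.2 : ℕ) : ℝ))
  have hdiagR : ∑ i : Fin N, ((Ham A i i).choose 2 : ℝ) = (N : ℝ) * (k.choose 2 : ℝ) := by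
    simp [Ham_diag A, mul_comm]
  have hdiagH : ∑ i : Fin N, ((Ham A i i : ℕ) : ℝ) = (N : ℝ) * (k : ℝ) := by
    simp [Ham_diag A, mul_comm]
  have hoffcard : (((univ : Finset (Fin N)).offDiag.card : ℕ) : ℝ)
      = (N : ℝ) * ((N : ℝ) - 1) := by
    rw [Finset.offDiag_card, Finset.card_univ, Fintype.card_fin,
      Nat.cast_sub (Nat.le_mul_of_pos_left N hNn)]
    push_cast; ring
  -- Cauchy-Schwarz: total Hamming sum
  have hHam_all : (k : ℝ) * (N : ℝ) ^ 2
      ≤ (s : ℝ) * ∑ q : Fin N × Fin N, ((Ham A q.1 q.2 : ℕ) : ℝ) := by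
    have e : ∑ q : Fin N × Fin N, ((Ham A q.1 q.2 : ℕ) : ℝ)
        = ∑ c : Fin k, ∑ x : S, (((univ.filter fun i : Fin N => A i c = x).card : ℝ)) ^ 2 := by
      exact_mod_cast congrArg (Nat.cast : ℕ → ℝ) (sum_Ham A)
    rw [e, Finset.mul_sum]
    have hcc : ∀ c : Fin k, (N : ℝ) ^ 2
        ≤ (s : ℝ) * ∑ x : S, (((univ.filter fun i : Fin N => A i c = x).card : ℝ)) ^ 2 := by
      intro c
      have h1 : ∑ x : S, ((univ.filter fun i : Fin N => A i c = x).card : ℝ) = (N : ℝ) := by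
        exact_mod_cast congrArg (Nat.cast : ℕ → ℝ) (fiber_card_sum (fun i => A i c))
      have h2 := sq_sum_le_card_mul_sum_sq (s := (univ : Finset S))
        (f := fun x => ((univ.filter fun i : Fin N => A i c = x).card : ℝ))
      rw [h1] at h2
      simpa [Finset.card_univ, hcard] using h2
    calc (k : ℝ) * (N : ℝ) ^ 2 = ∑ _c : Fin k, (N : ℝ) ^ 2 := by
          rw [Finset.sum_const, Finset.card_univ, Fintype.card_fin, nsmul_eq_mul]
      _ ≤ _ := Finset.sum_le_sum fun c _ => hcc c
  -- off-diagonal Hamming bound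
  have hoffH : γ * ((N : ℝ) * ((N : ℝ) - 1))
      ≤ ∑ q ∈ (univ : Finset (Fin N)).offDiag, ((Ham A q.1 q.2 : ℕ) : ℝ) := by
    have h1 : (s : ℝ) * ∑ q ∈ (univ : Finset (Fin N)).offDiag, ((Ham A q.1 q.2 : ℕ) : ℝ)
        = (s : ℝ) * (∑ q : Fin N × Fin N, ((Ham A q.1 q.2 : ℕ) : ℝ))
          - (s : ℝ) * ((N : ℝ) * (k : ℝ)) := by
      rw [hsplitH, hdiagH]; ring
    have h2 : (s : ℝ) * (γ * ((N : ℝ) * ((N : ℝ) - 1)))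
        = (k : ℝ) * (N : ℝ) ^ 2 - (s : ℝ) * ((N : ℝ) * (k : ℝ)) := by
      rw [hNR]
      linear_combination ((s : ℝ) * (l : ℝ) * (s : ℝ) ^ 2) * hγk
    have h3 : (s : ℝ) * (γ * ((N : ℝ) * ((N : ℝ) - 1)))
        ≤ (s : ℝ) * ∑ q ∈ (univ : Finset (Fin N)).offDiag, ((Ham A q.1 q.2 : ℕ) : ℝ) := by
      rw [h1, h2]; linarith [hHam_all]
    exact le_of_mul_le_mul_left h3 hs0
  -- tangent bound on off-diagonal
  have htan : ∑ q ∈ (univ : Finset (Fin N)).offDiag,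
        ((m.choose 2 : ℝ) + (m : ℝ) * (((Ham A q.1 q.2 : ℕ) : ℝ) - (m : ℝ)))
      ≤ ∑ q ∈ (univ : Finset (Fin N)).offDiag, ((Ham A q.1 q.2).choose 2 : ℝ) :=
    Finset.sum_le_sum fun q _ => choose2_tangent m _
  have hLHS : ∑ q ∈ (univ : Finset (Fin N)).offDiag,
        ((m.choose 2 : ℝ) + (m : ℝ) * (((Ham A q.1 q.2 : ℕ) : ℝ) - (m : ℝ)))
      = (N : ℝ) * ((N : ℝ) - 1) * ((m.choose 2 : ℝ) - (m : ℝ) ^ 2)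
        + (m : ℝ) * ∑ q ∈ (univ : Finset (Fin N)).offDiag, ((Ham A q.1 q.2 : ℕ) : ℝ) := by
    have e : ∀ q ∈ (univ : Finset (Fin N)).offDiag,
        (m.choose 2 : ℝ) + (m : ℝ) * (((Ham A q.1 q.2 : ℕ) : ℝ) - (m : ℝ))
          = ((m.choose 2 : ℝ) - (m : ℝ) ^ 2) + (m : ℝ) * ((Ham A q.1 q.2 : ℕ) : ℝ) :=
      fun q _ => by ring
    rw [Finset.sum_congr rfl e, Finset.sum_add_distrib, Finset.sum_const, ← Finset.mul_sum,
      nsmul_eq_mul, hoffcard]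
  -- combine
  have hHoff : (m : ℝ) * (γ * ((N : ℝ) * ((N : ℝ) - 1)))
      ≤ (m : ℝ) * ∑ q ∈ (univ : Finset (Fin N)).offDiag, ((Ham A q.1 q.2 : ℕ) : ℝ) :=
    mul_le_mul_of_nonneg_left hoffH (Nat.cast_nonneg m)
  have hcast : ((∑ q : Fin N × Fin N, (Ham A q.1 q.2).choose 2 : ℕ) : ℝ)
      = ∑ q : Fin N × Fin N, ((Ham A q.1 q.2).choose 2 : ℝ) := by
    push_cast; rfl
  have key : (l : ℝ) * (s : ℝ) ^ 2 * ((l : ℝ) * (s : ℝ) ^ 2 - 1) *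
        ((m.choose 2 : ℝ) + (m : ℝ) * (γ - (m : ℝ)))
      = (N : ℝ) * ((N : ℝ) - 1) * ((m.choose 2 : ℝ) - (m : ℝ) ^ 2)
        + (m : ℝ) * (γ * ((N : ℝ) * ((N : ℝ) - 1))) := by
    rw [hNR]; ring
  have key2 : (l : ℝ) * ((l : ℝ) - 1) * (s : ℝ) ^ 2 * (k.choose 2 : ℝ)
      = (l : ℝ) ^ 2 * (s : ℝ) ^ 2 * (k.choose 2 : ℝ) - (N : ℝ) * (k.choose 2 : ℝ) := by
    rw [hNR]; ring
  rw [hC, hcast, hsplitR, hdiagR]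
  linarith [htan, hLHS, hHoff, key, key2]
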